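/- Let $H_1, \ldots, H_r$ be connected graphs on disjoint vertex sets with $r \geq 2$, and let $G = \mathrm{cone}(v, \bigsqcup_{i=1}^r H_i)$ be the cone of a new vertex $v$ over their disjoint union. Then $c_G(T) = |T| + 1$ for all $T \in \mathcal{C}(G)$ if and only if $r = 2$ and $c_{H_i}(T_i) = |T_i| + 1$ for all $T_i \in \mathcal{C}(H_i)$ and $i = 1, \ldots, r$. -/

import Mathlib

open SimpleGraph Set

/-- Number of connected components of the induced subgraph of `G` on `s`. -/
noncomputable def nc {V : Type*} (G : SimpleGraph V) (s : Set V) : ℕ :=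
  Nat.card (G.induce s).ConnectedComponent

/-- `T` has the cut point property for `G`: every `i ∈ T` is a cut point of the
induced subgraph on `Tᶜ ∪ {i}` (removing `i` increases the number of components). -/
def CutPointProperty {V : Type*} (G : SimpleGraph V) (T : Set V) : Prop :=
  ∀ i ∈ T, nc G (Tᶜ ∪ {i}) < nc G Tᶜ

/-- The join `G₁ * G₂` of two graphs on disjoint vertex sets. -/
def joinGraph {V₁ V₂ : Type*} (G₁ : SimpleGraph V₁) (G₂ : SimpleGraph V₂) :
    SimpleGraph (V₁ ⊕ V₂) where
  Adj v w :=
    match v, w with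
    | Sum.inl a, Sum.inl b => G₁.Adj a b
    | Sum.inr a, Sum.inr b => G₂.Adj a b
    | Sum.inl _, Sum.inr _ => True
    | Sum.inr _, Sum.inl _ => True
  symm := by constructor; rintro (a | a) (b | b) h <;> simp_all <;> exact h.symm
  loopless := by constructor; rintro (a | a) h <;> simp_all

/-- Disjoint union of an indexed family of graphs. -/
def sigmaGraph {ι : Type*} {V : ι → Type*} (G : ∀ i, SimpleGraph (V i)) :
    SimpleGraph (Σ i, V i) where
  Adj v w := ∃ h : v.1 = w.1, (G w.1).Adj (h ▸ v.2) w.2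
  symm := by
    constructor
    rintro ⟨i, a⟩ ⟨j, b⟩ ⟨h, hab⟩
    dsimp at h hab ⊢
    subst h
    exact ⟨rfl, hab.symm⟩
  loopless := by
    constructor
    rintro ⟨i, a⟩ ⟨h, hab⟩
    dsimp at h hab
    exact (G i).irrefl hab
/-- The corona `H ⊙ H'`: one copy of `H'` for each vertex `v` of `H`,
with every vertex of the copy joined to `v`. -/
def coronaGraph {V₁ V₂ : Type*} (H : SimpleGraph V₁) (H' : SimpleGraph V₂) :
    SimpleGraph (V₁ ⊕ V₁ × V₂) where
  Adj v w :=
    match v, w with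
    | Sum.inl a, Sum.inl b => H.Adj a b
    | Sum.inl a, Sum.inr p => a = p.1
    | Sum.inr p, Sum.inl b => p.1 = b
    | Sum.inr p, Sum.inr q => p.1 = q.1 ∧ H'.Adj p.2 q.2
  symm := by
    constructor
    rintro (a | p) (b | q) h <;> dsimp at h ⊢
    · exact h.symm
    · exact h.symm
    · exact h.symm
    · exact ⟨h.1.symm, h.2.symm⟩
  loopless := by constructor; rintro (a | p) h <;> simp_all

/-- The whisker graph `W(H)`: a pendant vertex attached to each vertex of `H`. -/
def whiskerGraph {V : Type*} (H : SimpleGraph V) : SimpleGraph (V ⊕ V) where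
  Adj v w :=
    match v, w with
    | Sum.inl a, Sum.inl b => H.Adj a b
    | Sum.inl a, Sum.inr b => a = b
    | Sum.inr a, Sum.inl b => a = b
    | Sum.inr _, Sum.inr _ => False
  symm := by constructor; rintro (a | a) (b | b) h <;> simp_all; exact h.symm
  loopless := by constructor; rintro (a | a) h <;> simp_all

/-- `F` is (the vertex set of) a maximal clique of `G`. -/
def MaxClique {V : Type*} (G : SimpleGraph V) (F : Set V) : Prop :=
  Maximal G.IsClique F

/-- A graph is chordal if every cycle of length at least 4 has a chord. -/
def IsChordal {V : Type*} (G : SimpleGraph V) : Prop :=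
  ∀ (n : ℕ), 4 ≤ n → ∀ c : ℕ → V, Set.InjOn c (Set.Iio n) →
    (∀ i < n, G.Adj (c i) (c ((i + 1) % n))) →
    ∃ i < n, ∃ j < n, j ≠ i ∧ j ≠ (i + 1) % n ∧ i ≠ (j + 1) % n ∧ G.Adj (c i) (c j)

/-- A generalized block graph: a connected chordal graph in which any three distinct
maximal cliques with nonempty common intersection have all pairwise intersections equal. -/
def GenBlockGraph {V : Type*} (G : SimpleGraph V) : Prop :=
  G.Connected ∧ IsChordal G ∧
    ∀ F₁ F₂ F₃ : Set V, MaxClique G F₁ → MaxClique G F₂ → MaxClique G F₃ →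
      F₁ ≠ F₂ → F₁ ≠ F₃ → F₂ ≠ F₃ → (F₁ ∩ F₂ ∩ F₃).Nonempty →
      F₁ ∩ F₂ = F₁ ∩ F₃ ∧ F₁ ∩ F₂ = F₂ ∩ F₃

/-- `A` is a cut set of `G`: deleting `A` increases the number of connected components. -/
def IsCutSet {V : Type*} (G : SimpleGraph V) (A : Set V) : Prop :=
  nc G Set.univ < nc G Aᶜ

/-- `A` is an inclusion-minimal cut set of `G`. -/
def IsMinCutSet {V : Type*} (G : SimpleGraph V) (A : Set V) : Prop :=
  IsCutSet G A ∧ ∀ B ⊂ A, ¬ IsCutSet G B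

/-- `A` is a `t`-minimal cut set of `G`: a minimal cut set which is the common
intersection of exactly `t` maximal cliques of `G` and disjoint from all other
maximal cliques. -/
def IsTMinCut {V : Type*} (G : SimpleGraph V) (t : ℕ) (A : Set V) : Prop :=
  IsMinCutSet G A ∧
  {F : Set V | MaxClique G F ∧ A ⊆ F}.ncard = t ∧
  ⋂₀ {F : Set V | MaxClique G F ∧ A ⊆ F} = A ∧
  ∀ F : Set V, MaxClique G F → ¬ A ⊆ F → F ∩ A = ∅

/-- `B` is a branch of the facet `F` in the clique complex of `G`. -/
def IsBranch {V : Type*} (G : SimpleGraph V) (F B : Set V) : Prop :=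
  MaxClique G B ∧ B ≠ F ∧ ∀ H : Set V, MaxClique G H → H ≠ F → H ∩ F ⊆ B ∩ F

/-- `F` is a leaf of the clique complex of `G`. -/
def IsLeafClique {V : Type*} (G : SimpleGraph V) (F : Set V) : Prop :=
  MaxClique G F ∧ ((∀ F' : Set V, MaxClique G F' → F' = F) ∨ ∃ B, IsBranch G F B)

/-!
A vertex set containing the apex `v` of the cone induces a connected subgraph, and removing `v`
leaves the disjoint union, whose components are those of the summands. So a nonempty
`T ∈ 𝒞(cone)` is `{v} ∪ ⋃ Tᵢ` with `Tᵢ ∈ 𝒞(Hᵢ)`, and it has `∑ c_{Hᵢ}(Tᵢ)` components and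
`1 + ∑ |Tᵢ|` elements. Taking all `Tᵢ = ∅` forces `r = 2`; then `c(Tᵢ) = |Tᵢ| + 1` holds in
every summand exactly when `c(T) = |T| + 1` holds in the cone.
-/

/-- Rauf–Rinaldo's combinatorial form of unmixedness of the binomial edge ideal. -/
def IsCutUnmixed {V : Type*} (G : SimpleGraph V) : Prop :=
  ∀ T : Set V, CutPointProperty G T → nc G Tᶜ = T.ncard + 1

section Components

variable {V : Type*} {G : SimpleGraph V}

lemma nc_eq_one_of_connected {s : Set V} (h : (G.induce s).Connected) : nc G s = 1 :=
  Nat.card_eq_one_iff_unique.mpr ⟨h.preconnected.subsingleton_connectedComponent,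
    h.nonempty.map (G.induce s).connectedComponentMk⟩

lemma nc_univ_of_connected (h : G.Connected) : nc G univ = 1 :=
  nc_eq_one_of_connected ((induceUnivIso G).symm.connected_iff.mp h)

lemma CutPointProperty.nc_compl_pos {T : Set V} (hT : CutPointProperty G T)
    (hne : T.Nonempty) : 0 < nc G Tᶜ :=
  let ⟨x, hx⟩ := hne
  (Nat.zero_le _).trans_lt (hT x hx)

end Components

section Sigma

variable {ι : Type*} {W : ι → Type*} (G : ∀ i, SimpleGraph (W i))

lemma sigmaGraph_adj_componentMk {x y : Σ i, W i} (h : (sigmaGraph G).Adj x y) :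
    (⟨x.1, (G x.1).connectedComponentMk x.2⟩ : Σ i, (G i).ConnectedComponent) =
      ⟨y.1, (G y.1).connectedComponentMk y.2⟩ := by
  obtain ⟨i, a⟩ := x
  obtain ⟨j, b⟩ := y
  obtain ⟨hij, h⟩ := h
  dsimp only at hij h
  subst hij
  exact congrArg (Sigma.mk i) (ConnectedComponent.sound h.reachable)

def sigmaGraphHom (i : ι) : G i →g sigmaGraph G where
  toFun := Sigma.mk i
  map_rel' h := ⟨rfl, h⟩

noncomputable def sigmaGraphConnectedComponentEquiv :
    (sigmaGraph G).ConnectedComponent ≃ Σ i, (G i).ConnectedComponent where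
  toFun := ConnectedComponent.lift (fun x => ⟨x.1, (G x.1).connectedComponentMk x.2⟩)
    fun _ _ p hp => by
      clear hp
      induction p with
      | nil => rfl
      | cons h _ ih => exact (sigmaGraph_adj_componentMk G h).trans ih
  invFun c := c.2.map (sigmaGraphHom G c.1)
  left_inv := ConnectedComponent.ind fun _ => rfl
  right_inv := fun ⟨_, c⟩ => ConnectedComponent.ind (fun _ => rfl) c

def induceSigmaGraphIso (s : Set (Σ i, W i)) :
    (sigmaGraph G).induce s ≃g sigmaGraph fun i => (G i).induce (Sigma.mk i ⁻¹' s) where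
  toFun x := ⟨x.1.1, x.1.2, x.2⟩
  invFun x := ⟨⟨x.1, x.2.1⟩, x.2.2⟩
  left_inv _ := rfl
  right_inv _ := rfl
  map_rel_iff' := by
    rintro ⟨⟨i, a⟩, ha⟩ ⟨⟨j, b⟩, hb⟩
    change (∃ _ : i = j, _) ↔ ∃ _ : i = j, _
    constructor <;> rintro ⟨rfl, h⟩ <;> exact ⟨rfl, h⟩

variable [Fintype ι] [∀ i, Finite (W i)]

lemma nc_sigmaGraph (s : Set (Σ i, W i)) :
    nc (sigmaGraph G) s = ∑ i, nc (G i) (Sigma.mk i ⁻¹' s) := by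
  rw [nc, Nat.card_congr ((induceSigmaGraphIso G s).connectedComponentEquiv.trans
    (sigmaGraphConnectedComponentEquiv _)), Nat.card_sigma]
  rfl

lemma ncard_eq_sum_ncard_preimage_sigmaMk (S : Set (Σ i, W i)) :
    S.ncard = ∑ i, (Sigma.mk i ⁻¹' S).ncard := by
  rw [← Nat.card_coe_set_eq, Nat.card_congr (β := Σ i, Sigma.mk i ⁻¹' S)
    ⟨fun x => ⟨x.1.1, x.1.2, x.2⟩, fun x => ⟨⟨x.1, x.2.1⟩, x.2.2⟩, fun _ => rfl, fun _ => rfl⟩,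
    Nat.card_sigma]
  simp only [Nat.card_coe_set_eq]

lemma nc_sigmaGraph_univ (hG : ∀ i, (G i).Connected) :
    nc (sigmaGraph G) univ = Fintype.card ι := by
  simp [nc_sigmaGraph, nc_univ_of_connected (hG _)]

lemma nc_sigmaGraph_union_singleton_lt_iff (s : Set (Σ i, W i)) (j : ι) (x : W j) :
    nc (sigmaGraph G) (s ∪ {⟨j, x⟩}) < nc (sigmaGraph G) s ↔
      nc (G j) (Sigma.mk j ⁻¹' s ∪ {x}) < nc (G j) (Sigma.mk j ⁻¹' s) := by
  classical
  have hj : Sigma.mk j ⁻¹' (s ∪ {⟨j, x⟩}) = Sigma.mk j ⁻¹' s ∪ {x} := by ext; simp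
  have hne : ∀ i ∈ ({j}ᶜ : Finset ι), Sigma.mk i ⁻¹' (s ∪ {⟨j, x⟩}) = Sigma.mk i ⁻¹' s := by
    intro i hi
    ext
    simp_all
  rw [nc_sigmaGraph, nc_sigmaGraph, Fintype.sum_eq_add_sum_compl j,
    Fintype.sum_eq_add_sum_compl j, Finset.sum_congr rfl fun i hi => by rw [hne i hi], hj,
    add_lt_add_iff_right]

lemma cutPointProperty_sigmaGraph_iff (S : Set (Σ i, W i)) :
    CutPointProperty (sigmaGraph G) S ↔ ∀ i, CutPointProperty (G i) (Sigma.mk i ⁻¹' S) :=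
  ⟨fun h i x hx => (nc_sigmaGraph_union_singleton_lt_iff G Sᶜ i x).mp (h ⟨i, x⟩ hx),
    fun h ⟨i, x⟩ hx => (nc_sigmaGraph_union_singleton_lt_iff G Sᶜ i x).mpr (h i x hx)⟩

lemma cutPointProperty_sigmaGraph_image_sigmaMk_iff (i : ι) (A : Set (W i)) :
    CutPointProperty (sigmaGraph G) (Sigma.mk i '' A) ↔ CutPointProperty (G i) A := by
  rw [cutPointProperty_sigmaGraph_iff]
  refine ⟨fun h => by simpa [preimage_image_eq _ sigma_mk_injective] using h i, fun h j => ?_⟩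
  obtain rfl | hji := eq_or_ne j i
  · rwa [preimage_image_eq _ sigma_mk_injective]
  · simp [preimage_image_sigmaMk_of_ne hji, CutPointProperty]

lemma nc_sigmaGraph_compl_image_sigmaMk (hG : ∀ i, (G i).Connected) (i : ι) (A : Set (W i)) :
    nc (sigmaGraph G) (Sigma.mk i '' A)ᶜ = nc (G i) Aᶜ + (Fintype.card ι - 1) := by
  classical
  rw [nc_sigmaGraph, Fintype.sum_eq_add_sum_compl i, preimage_compl,
    preimage_image_eq _ sigma_mk_injective, Finset.sum_congr rfl fun j hj => by
      rw [preimage_compl, preimage_image_sigmaMk_of_ne (by simpa using hj), compl_empty,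
        nc_univ_of_connected (hG j)]]
  simp [Finset.card_compl]

end Sigma

section Cone

variable {W : Type*} (G : SimpleGraph W)

lemma connected_induce_cone_of_apex_mem {s : Set (Unit ⊕ W)} (hs : Sum.inl () ∈ s) :
    ((joinGraph (⊥ : SimpleGraph Unit) G).induce s).Connected := by
  rw [connected_iff_exists_forall_reachable]
  refine ⟨⟨_, hs⟩, ?_⟩
  rintro ⟨⟨⟩ | w, _⟩
  · rfl
  · exact Adj.reachable trivial

lemma nc_cone_of_apex_mem {s : Set (Unit ⊕ W)} (hs : Sum.inl () ∈ s) :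
    nc (joinGraph (⊥ : SimpleGraph Unit) G) s = 1 :=
  nc_eq_one_of_connected (connected_induce_cone_of_apex_mem G hs)

def induceConeIso {s : Set (Unit ⊕ W)} (hs : Sum.inl () ∉ s) :
    (joinGraph (⊥ : SimpleGraph Unit) G).induce s ≃g G.induce (Sum.inr ⁻¹' s) where
  toFun
    | ⟨.inl (), h⟩ => absurd h hs
    | ⟨.inr w, h⟩ => ⟨w, h⟩
  invFun w := ⟨.inr w.1, w.2⟩
  left_inv := by rintro ⟨⟨⟩ | w, h⟩; exacts [absurd h hs, rfl]
  right_inv _ := rfl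
  map_rel_iff' := by
    rintro ⟨⟨⟩ | w, h⟩ ⟨⟨⟩ | w', h'⟩
    all_goals first | exact absurd h hs | exact absurd h' hs | exact Iff.rfl

lemma nc_cone_of_apex_not_mem {s : Set (Unit ⊕ W)} (hs : Sum.inl () ∉ s) :
    nc (joinGraph (⊥ : SimpleGraph Unit) G) s = nc G (Sum.inr ⁻¹' s) :=
  Nat.card_congr (induceConeIso G hs).connectedComponentEquiv

lemma eq_empty_of_cutPointProperty_cone {T : Set (Unit ⊕ W)}
    (hT : CutPointProperty (joinGraph (⊥ : SimpleGraph Unit) G) T) (hv : Sum.inl () ∉ T) :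
    T = ∅ := by
  refine eq_empty_of_forall_notMem fun t ht => (hT t ht).ne ?_
  rw [nc_cone_of_apex_mem G (Or.inl hv), nc_cone_of_apex_mem G hv]

lemma nc_cone_compl_insert_apex (S : Set W) :
    nc (joinGraph (⊥ : SimpleGraph Unit) G) (insert (Sum.inl ()) (Sum.inr '' S))ᶜ = nc G Sᶜ := by
  rw [nc_cone_of_apex_not_mem G (by simp)]
  congr 1
  ext
  simp

lemma cutPointProperty_cone_insert_apex_iff (S : Set W) :
    CutPointProperty (joinGraph (⊥ : SimpleGraph Unit) G) (insert (Sum.inl ()) (Sum.inr '' S)) ↔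
      1 < nc G Sᶜ ∧ CutPointProperty G S := by
  unfold CutPointProperty
  rw [forall_mem_insert, forall_mem_image, nc_cone_compl_insert_apex,
    nc_cone_of_apex_mem G (Or.inr rfl)]
  refine and_congr_right' (forall₂_congr fun w _ => ?_)
  rw [nc_cone_of_apex_not_mem G (by simp)]
  congr! 2
  ext
  simp

lemma ncard_insert_apex [Finite W] (S : Set W) :
    (insert (Sum.inl ()) (Sum.inr '' S) : Set (Unit ⊕ W)).ncard = S.ncard + 1 := by
  rw [ncard_insert_of_notMem (by simp), ncard_image_of_injective _ Sum.inr_injective]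

lemma isCutUnmixed_cone_iff [Finite W] :
    IsCutUnmixed (joinGraph (⊥ : SimpleGraph Unit) G) ↔
      ∀ S : Set W, 1 < nc G Sᶜ → CutPointProperty G S → nc G Sᶜ = S.ncard + 2 := by
  constructor
  · intro h S hS hSc
    have := h _ ((cutPointProperty_cone_insert_apex_iff G S).mpr ⟨hS, hSc⟩)
    rwa [nc_cone_compl_insert_apex, ncard_insert_apex] at this
  · intro h T hT
    by_cases hv : Sum.inl () ∈ T
    · obtain ⟨S, rfl⟩ : ∃ S, T = insert (Sum.inl ()) (Sum.inr '' S) :=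
        ⟨Sum.inr ⁻¹' T, by ext (⟨⟩ | w) <;> simp [hv]⟩
      obtain ⟨hS, hSc⟩ := (cutPointProperty_cone_insert_apex_iff G S).mp hT
      rw [nc_cone_compl_insert_apex, h S hS hSc, ncard_insert_apex]
    · rw [eq_empty_of_cutPointProperty_cone G hT hv, compl_empty,
        nc_cone_of_apex_mem G (mem_univ _), ncard_empty]

end Cone

theorem isCutUnmixed_cone_sigmaGraph_iff {ι : Type*} [Fintype ι]
    (hι : 2 ≤ Fintype.card ι) {V : ι → Type*} [∀ i, Finite (V i)]
    (H : ∀ i, SimpleGraph (V i)) (hH : ∀ i, (H i).Connected) :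
    IsCutUnmixed (joinGraph (⊥ : SimpleGraph Unit) (sigmaGraph H)) ↔
      Fintype.card ι = 2 ∧ ∀ i, IsCutUnmixed (H i) := by
  rw [isCutUnmixed_cone_iff]
  constructor
  · intro h
    have hcard : Fintype.card ι = 2 := by
      have := h ∅ (by rw [compl_empty, nc_sigmaGraph_univ H hH]; omega) fun _ h => h.elim
      rwa [compl_empty, nc_sigmaGraph_univ H hH, ncard_empty] at this
    refine ⟨hcard, fun i A hA => ?_⟩
    rcases A.eq_empty_or_nonempty with rfl | hne
    · rw [compl_empty, nc_univ_of_connected (hH i), ncard_empty]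
    · have hpos := hA.nc_compl_pos hne
      have := h (Sigma.mk i '' A) (by rw [nc_sigmaGraph_compl_image_sigmaMk H hH]; omega)
        ((cutPointProperty_sigmaGraph_image_sigmaMk_iff H i A).mpr hA)
      rw [nc_sigmaGraph_compl_image_sigmaMk H hH,
        ncard_image_of_injective _ sigma_mk_injective] at this
      omega
  · rintro ⟨hcard, h⟩ S - hS
    rw [cutPointProperty_sigmaGraph_iff] at hS
    calc nc (sigmaGraph H) Sᶜ = ∑ i, ((Sigma.mk i ⁻¹' S).ncard + 1) := by
          rw [nc_sigmaGraph]
          exact Finset.sum_congr rfl fun i _ => h i _ (hS i)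
      _ = S.ncard + 2 := by
          rw [Finset.sum_add_distrib, ← ncard_eq_sum_ncard_preimage_sigmaMk]
          simp [hcard]

/-- the cone over a disjoint union of `r ≥ 2` connected graphs is unmixed
(in the Rauf–Rinaldo sense) iff `r = 2` and each summand is unmixed. -/
theorem stmt10 {r : ℕ} (hr : 2 ≤ r) {V : Fin r → Type*} [∀ i, Fintype (V i)]
    (H : ∀ i, SimpleGraph (V i)) (hH : ∀ i, (H i).Connected) :
    (∀ T : Set (Unit ⊕ Σ i, V i),
        CutPointProperty (joinGraph (⊥ : SimpleGraph Unit) (sigmaGraph H)) T →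
        nc (joinGraph (⊥ : SimpleGraph Unit) (sigmaGraph H)) Tᶜ = T.ncard + 1) ↔
      (r = 2 ∧ ∀ i, ∀ Ti : Set (V i), CutPointProperty (H i) Ti →
        nc (H i) Tiᶜ = Ti.ncard + 1) := by
  have h := isCutUnmixed_cone_sigmaGraph_iff (by rwa [Fintype.card_fin]) H hH
  rwa [Fintype.card_fin] at h
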